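/- There exists a constant C_Γ > 1, depending only on the Schottky data, such that for every nonempty word 𝐚 ∈ W° and every letter b ∈ A with 𝐚 → b, one has |I_{𝐚b}| ≤ (1 − C_Γ^{-1}) |I_𝐚|. -/

import Mathlib

open MeasureTheory Set Real Pointwise

noncomputable section

abbrev SL2 := Matrix.SpecialLinearGroup (Fin 2) ℝ

/-- The Möbius transformation of `ℝ` associated to `g ∈ SL(2,ℝ)` (junk value at the pole). -/
def mobius (g : SL2) (x : ℝ) : ℝ :=
  (g 0 0 * x + g 0 1) / (g 1 0 * x + g 1 1)

/-- The derivative `γ'(x) = (cx+d)⁻²` of the Möbius transformation. -/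
def mobiusDeriv (g : SL2) (x : ℝ) : ℝ :=
  ((g 1 0 * x + g 1 1) ^ 2)⁻¹

/-- The derivative of the Möbius transformation in the ball model,
`|γ'(x)|_B = ((1+x²)/(1+γ(x)²)) γ'(x)`. -/
def mobiusDerivB (g : SL2) (x : ℝ) : ℝ :=
  ((1 + x ^ 2) / (1 + mobius g x ^ 2)) * mobiusDeriv g x

/-- The Möbius action of `SL(2,ℝ)` on `ℝ ∪ {∞}`. -/
def mobiusOP (g : SL2) (x : OnePoint ℝ) : OnePoint ℝ :=
  Option.elim x
    (if g 1 0 = 0 then OnePoint.infty else ((g 0 0 / g 1 0 : ℝ) : OnePoint ℝ))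
    (fun y => if g 1 0 * y + g 1 1 = 0 then OnePoint.infty
      else ((mobius g y : ℝ) : OnePoint ℝ))

/-- The pole `γ⁻¹(∞) = -d/c` of `γ = [[a,b],[c,d]]`. -/
def mobiusPole (g : SL2) : ℝ := -(g 1 1) / (g 1 0)

/-- The distortion factor `α(γ, [x₀,x₁]) = log((γ⁻¹(∞) − x₁)/(γ⁻¹(∞) − x₀))`,
with the convention `α = 0` when `γ⁻¹(∞) = ∞` (i.e. `c = 0`). -/
def alphaDist (g : SL2) (x₀ x₁ : ℝ) : ℝ :=
  if g 1 0 = 0 then 0 else Real.log ((mobiusPole g - x₁) / (mobiusPole g - x₀))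

/-- The letter `ā` paired with `a` in the alphabet `{1,…,2r}` (modelled by `Fin (2r)`). -/
def bar {r : ℕ} (a : Fin (2 * r)) : Fin (2 * r) :=
  if h : (a : ℕ) < r then ⟨(a : ℕ) + r, by omega⟩
  else ⟨(a : ℕ) - r, by have := a.isLt; omega⟩

/-- Schottky data: `2r` disjoint compact intervals `I_a = [ξ₀ a, ξ₁ a]` on the real line and
transformations `γ_a ∈ SL(2,ℝ)` with `γ_ā = γ_a⁻¹` such that `γ_a` maps the complement (in
`ℝ ∪ {∞}`) of the interior of `I_ā` onto `I_a`. -/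
structure SchottkyData (r : ℕ) where
  hr : 2 ≤ r
  ξ₀ : Fin (2 * r) → ℝ
  ξ₁ : Fin (2 * r) → ℝ
  hlt : ∀ a, ξ₀ a < ξ₁ a
  hdisj : ∀ a b, a ≠ b → Disjoint (Icc (ξ₀ a) (ξ₁ a)) (Icc (ξ₀ b) (ξ₁ b))
  γ : Fin (2 * r) → SL2
  hinv : ∀ a, γ (bar a) = (γ a)⁻¹
  hmap : ∀ a, mobiusOP (γ a) ''
      (univ \ ((fun t : ℝ => (t : OnePoint ℝ)) '' Ioo (ξ₀ (bar a)) (ξ₁ (bar a))))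
      = (fun t : ℝ => (t : OnePoint ℝ)) '' Icc (ξ₀ a) (ξ₁ a)

namespace SchottkyData

variable {r : ℕ}

/-- `l` is a word: no letter is followed by its bar. -/
def IsWord (_ : SchottkyData r) (l : List (Fin (2 * r))) : Prop :=
  l.Chain' fun p q => q ≠ bar p

/-- The group element `γ_𝐚 = γ_{a_1} ⋯ γ_{a_n}` of a word. -/
def wordγ (S : SchottkyData r) (l : List (Fin (2 * r))) : SL2 :=
  (l.map S.γ).prod

/-- The interval `I_𝐚 = γ_{𝐚'}(I_{a_n})` of a nonempty word (and `∅` for the empty word). -/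
def wordI (S : SchottkyData r) (l : List (Fin (2 * r))) : Set ℝ :=
  if h : l = [] then ∅
  else mobius (S.wordγ l.dropLast) '' Icc (S.ξ₀ (l.getLast h)) (S.ξ₁ (l.getLast h))

/-- The limit set `Λ_Γ = ⋂_n ⋃_{𝐚 ∈ W_n} I_𝐚`. -/
def limitSet (S : SchottkyData r) : Set ℝ :=
  ⋂ n : ℕ, ⋃ (l : List (Fin (2 * r))) (_ : S.IsWord l ∧ l.length = n + 1), S.wordI l

/-- `μ` is the (δ-conformal) Patterson–Sullivan measure: a Borel probability measure
supported on the limit set satisfying the equivariance property under the group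
generated by the Schottky transformations. -/
def IsPS (S : SchottkyData r) (δ : ℝ) (μ : Measure ℝ) : Prop :=
  IsProbabilityMeasure μ ∧ μ S.limitSetᶜ = 0 ∧
    ∀ g ∈ Subgroup.closure (Set.range S.γ), ∀ f : ℝ → ℝ, Measurable f →
      (∃ C, ∀ x, |f x| ≤ C) →
      ∫ x, f x ∂μ = ∫ x, f (mobius g x) * mobiusDerivB g x ^ δ ∂μ

/-- The partition `Z(τ) = {𝐚 ∈ W° : |I_𝐚| ≤ τ < |I_{𝐚'}|}` (with `|I_∅| = ∞`). -/
def Zpart (S : SchottkyData r) (τ : ℝ) : Set (List (Fin (2 * r))) :=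
  {l | S.IsWord l ∧ l ≠ [] ∧ (MeasureTheory.volume (S.wordI l)).toReal ≤ τ ∧
    (l.dropLast = [] ∨ τ < (MeasureTheory.volume (S.wordI l.dropLast)).toReal)}

end SchottkyData

/-- The length `|I|` of an interval `I ⊂ ℝ`. -/
def ivlen (I : Set ℝ) : ℝ := (MeasureTheory.volume I).toReal

/-- `𝐚 ⇝ 𝐛` : the last letter of `𝐚` equals the first letter of `𝐛`. -/
def chn {X : Type*} (l m : List X) : Prop :=
  ∃ (h1 : l ≠ []) (h2 : m ≠ []), l.getLast h1 = m.head h2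

/-- The center of an interval. -/
def ctr (I : Set ℝ) : ℝ := (sInf I + sSup I) / 2

end

noncomputable section

open MeasureTheory Set Real

/-! Write `𝐚 = 𝐦c`. Then `I_𝐚 = γ_𝐦(I_c)` and `I_{𝐚b} = γ_𝐦(γ_c(I_b))`, where `γ_c(I_b)` lies in
the interior of `I_c` because `b ≠ c̄`. A Möbius map without pole on `I_c` preserves the cross
ratio of the endpoints of `I_c` and of `γ_c(I_b)`, and this cross ratio bounds the ratio of the
lengths of the images, so `|I_{𝐚b}| ≤ ρ(c, b) |I_𝐚|` with `ρ(c, b) < 1` depending only on the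
pair of letters. There are finitely many pairs. -/

def mobiusDen (g : SL2) (x : ℝ) : ℝ := g 1 0 * x + g 1 1

lemma mobius_eq_div_mobiusDen (g : SL2) (x : ℝ) :
    mobius g x = (g 0 0 * x + g 0 1) / mobiusDen g x := rfl

lemma SL2.det_eq_one (g : SL2) : g 0 0 * g 1 1 - g 0 1 * g 1 0 = 1 := by
  rw [← Matrix.det_fin_two]
  exact g.2

lemma SL2.mul_apply (g h : SL2) (i j : Fin 2) :
    (g * h) i j = g i 0 * h 0 j + g i 1 * h 1 j := by
  rw [Matrix.SpecialLinearGroup.coe_mul, Matrix.mul_apply, Fin.sum_univ_two]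

lemma mobius_one (x : ℝ) : mobius 1 x = x := by
  simp [mobius]

lemma mobiusDen_one (x : ℝ) : mobiusDen 1 x = 1 := by
  simp [mobiusDen]

lemma mobiusDen_mul {g h : SL2} {x : ℝ} (hx : mobiusDen h x ≠ 0) :
    mobiusDen (g * h) x = mobiusDen g (mobius h x) * mobiusDen h x := by
  rw [mobius_eq_div_mobiusDen]
  unfold mobiusDen at *
  rw [SL2.mul_apply, SL2.mul_apply]
  field_simp
  ring

lemma mobius_mul {g h : SL2} {x : ℝ} (hx : mobiusDen h x ≠ 0) :
    mobius (g * h) x = mobius g (mobius h x) := by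
  rw [mobius_eq_div_mobiusDen h] at *
  unfold mobius mobiusDen at *
  rw [SL2.mul_apply, SL2.mul_apply, SL2.mul_apply, SL2.mul_apply]
  field_simp
  ring

lemma image_mobius_mul {g h : SL2} {s : Set ℝ} (hden : ∀ t ∈ s, mobiusDen h t ≠ 0) :
    mobius (g * h) '' s = mobius g '' (mobius h '' s) := by
  rw [← image_comp]
  exact image_congr fun t ht => mobius_mul (hden t ht)

lemma mobius_sub_mobius {g : SL2} {x y : ℝ} (hx : mobiusDen g x ≠ 0)
    (hy : mobiusDen g y ≠ 0) :
    mobius g y - mobius g x = (y - x) / (mobiusDen g x * mobiusDen g y) := by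
  rw [mobius_eq_div_mobiusDen, mobius_eq_div_mobiusDen, div_sub_div _ _ hy hx,
    div_eq_div_iff (mul_ne_zero hy hx) (mul_ne_zero hx hy)]
  unfold mobiusDen
  linear_combination (y - x) * (g 1 0 * x + g 1 1) * (g 1 0 * y + g 1 1) * SL2.det_eq_one g

lemma mobiusDen_eq_mul_sub_mobiusPole {g : SL2} (hc : g 1 0 ≠ 0) (x : ℝ) :
    mobiusDen g x = g 1 0 * (x - mobiusPole g) := by
  unfold mobiusDen mobiusPole
  field_simp
  ring

lemma mobiusDen_ne_zero_of_ne_mobiusPole {g : SL2} (hc : g 1 0 ≠ 0) {x : ℝ}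
    (hx : x ≠ mobiusPole g) : mobiusDen g x ≠ 0 := by
  rw [mobiusDen_eq_mul_sub_mobiusPole hc]
  exact mul_ne_zero hc (sub_ne_zero.mpr hx)

-- `g 0 0 / g 1 0` is the image of `∞`.
lemma mobius_sub_div {g : SL2} (hc : g 1 0 ≠ 0) {x : ℝ} (hx : x ≠ mobiusPole g) :
    mobius g x - g 0 0 / g 1 0 = -1 / (g 1 0 ^ 2 * (x - mobiusPole g)) := by
  have hden := mobiusDen_ne_zero_of_ne_mobiusPole hc hx
  have hsq : g 1 0 ^ 2 * (x - mobiusPole g) = g 1 0 * mobiusDen g x := by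
    rw [mobiusDen_eq_mul_sub_mobiusPole hc]
    ring
  rw [hsq, mobius_eq_div_mobiusDen, div_sub_div _ _ hden hc,
    div_eq_div_iff (mul_ne_zero hden hc) (mul_ne_zero hc hden)]
  unfold mobiusDen
  linear_combination -(g 1 0 * x + g 1 1) * g 1 0 * SL2.det_eq_one g

lemma mobius_lt_div_of_mobiusPole_lt {g : SL2} (hc : g 1 0 ≠ 0) {x : ℝ}
    (hx : mobiusPole g < x) : mobius g x < g 0 0 / g 1 0 := by
  have h := mobius_sub_div hc hx.ne'
  have : 0 < g 1 0 ^ 2 * (x - mobiusPole g) := by positivity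
  have : -1 / (g 1 0 ^ 2 * (x - mobiusPole g)) < 0 := div_neg_of_neg_of_pos (by norm_num) this
  linarith

lemma div_lt_mobius_of_lt_mobiusPole {g : SL2} (hc : g 1 0 ≠ 0) {x : ℝ}
    (hx : x < mobiusPole g) : g 0 0 / g 1 0 < mobius g x := by
  have h := mobius_sub_div hc hx.ne
  have : g 1 0 ^ 2 * (x - mobiusPole g) < 0 :=
    mul_neg_of_pos_of_neg (by positivity) (sub_neg.mpr hx)
  have : 0 < -1 / (g 1 0 ^ 2 * (x - mobiusPole g)) := div_pos_of_neg_of_neg (by norm_num) this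
  linarith

lemma mobiusDen_mul_pos {g : SL2} {x y : ℝ} (hxy : x ≤ y)
    (hden : ∀ t ∈ Icc x y, mobiusDen g t ≠ 0) : 0 < mobiusDen g x * mobiusDen g y := by
  by_contra! hneg
  have hzero : (0 : ℝ) ∈ uIcc (mobiusDen g x) (mobiusDen g y) := by
    rcases mul_nonpos_iff.mp hneg with h | h
    · exact mem_uIcc.mpr (Or.inr ⟨h.2, h.1⟩)
    · exact mem_uIcc.mpr (Or.inl ⟨h.1, h.2⟩)
  have hcont : ContinuousOn (mobiusDen g) (uIcc x y) := by
    unfold mobiusDen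
    fun_prop
  obtain ⟨t, ht, ht0⟩ := intermediate_value_uIcc hcont hzero
  exact hden t (uIcc_of_le hxy ▸ ht) ht0

lemma mobius_lt_mobius {g : SL2} {x y : ℝ} (hden : ∀ t ∈ Icc x y, mobiusDen g t ≠ 0)
    (hxy : x < y) : mobius g x < mobius g y := by
  have hpos := mobiusDen_mul_pos hxy.le hden
  have h := mobius_sub_mobius (hden x ⟨le_rfl, hxy.le⟩) (hden y ⟨hxy.le, le_rfl⟩)
  have : 0 < (y - x) / (mobiusDen g x * mobiusDen g y) := div_pos (sub_pos.mpr hxy) hpos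
  linarith

lemma strictMonoOn_mobius {g : SL2} {a b : ℝ} (hden : ∀ t ∈ Icc a b, mobiusDen g t ≠ 0) :
    StrictMonoOn (mobius g) (Icc a b) := fun _ hx _ hy hxy =>
  mobius_lt_mobius (fun t ht => hden t ⟨hx.1.trans ht.1, ht.2.trans hy.2⟩) hxy

lemma mobius_image_Icc {g : SL2} {a b : ℝ} (hab : a ≤ b)
    (hden : ∀ t ∈ Icc a b, mobiusDen g t ≠ 0) :
    mobius g '' Icc a b = Icc (mobius g a) (mobius g b) := by
  have hcont : ContinuousOn (mobius g) (Icc a b) := by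
    unfold mobius
    exact ContinuousOn.div (by fun_prop) (by fun_prop) hden
  exact hcont.image_Icc_of_monotoneOn hab (strictMonoOn_mobius hden).monotoneOn

lemma ivlen_Icc {a b : ℝ} (hab : a ≤ b) : ivlen (Icc a b) = b - a := by
  rw [ivlen, Real.volume_Icc, ENNReal.toReal_ofReal (sub_nonneg.mpr hab)]

def crossRatio (a u v b : ℝ) : ℝ := (v - u) * (b - a) / ((v - a) * (b - u))

lemma crossRatio_lt_one {a u v b : ℝ} (hau : a < u) (huv : u ≤ v) (hvb : v < b) :
    crossRatio a u v b < 1 := by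
  have hpos : 0 < (v - a) * (b - u) := mul_pos (by linarith) (by linarith)
  rw [crossRatio, div_lt_one hpos]
  nlinarith [mul_pos (sub_pos.mpr hau) (sub_pos.mpr hvb)]

lemma sub_le_crossRatio_mul {a u v b : ℝ} (hau : a < u) (huv : u ≤ v) (hvb : v < b) :
    v - u ≤ crossRatio a u v b * (b - a) := by
  have hpos : 0 < (v - a) * (b - u) := mul_pos (by linarith) (by linarith)
  have hle : (v - a) * (b - u) ≤ (b - a) * (b - a) :=
    mul_le_mul (by linarith) (by linarith) (by linarith) (by linarith)
  rw [crossRatio, div_mul_eq_mul_div, le_div_iff₀ hpos]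
  nlinarith [mul_le_mul_of_nonneg_left hle (sub_nonneg.mpr huv)]

lemma crossRatio_mobius {g : SL2} {a u v b : ℝ} (ha : mobiusDen g a ≠ 0)
    (hu : mobiusDen g u ≠ 0) (hv : mobiusDen g v ≠ 0) (hb : mobiusDen g b ≠ 0) :
    crossRatio (mobius g a) (mobius g u) (mobius g v) (mobius g b) = crossRatio a u v b := by
  have hD : mobiusDen g a * mobiusDen g u * mobiusDen g v * mobiusDen g b ≠ 0 := by
    positivity
  simp only [crossRatio]
  rw [mobius_sub_mobius hu hv, mobius_sub_mobius ha hb, mobius_sub_mobius ha hv,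
    mobius_sub_mobius hu hb, div_mul_div_comm, div_mul_div_comm]
  convert div_div_div_cancel_right₀ hD ((v - u) * (b - a)) ((v - a) * (b - u)) using 2 <;> ring

lemma mobius_sub_le_crossRatio_mul {g : SL2} {a u v b : ℝ}
    (hden : ∀ t ∈ Icc a b, mobiusDen g t ≠ 0) (hau : a < u) (huv : u ≤ v) (hvb : v < b) :
    mobius g v - mobius g u ≤ crossRatio a u v b * (mobius g b - mobius g a) := by
  have hmono := strictMonoOn_mobius hden
  have ha : a ∈ Icc a b := ⟨le_rfl, by linarith⟩
  have hb : b ∈ Icc a b := ⟨by linarith, le_rfl⟩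
  have hu : u ∈ Icc a b := ⟨hau.le, by linarith⟩
  have hv : v ∈ Icc a b := ⟨by linarith, hvb.le⟩
  rw [← crossRatio_mobius (hden a ha) (hden u hu) (hden v hv) (hden b hb)]
  exact sub_le_crossRatio_mul (hmono ha hu hau) (hmono.monotoneOn hu hv huv) (hmono hv hb hvb)

lemma exists_one_lt_forall_le_one_sub_inv {ι : Type*} [Finite ι] {p : ι → Prop}
    {f : ι → ℝ} (hf : ∀ i, p i → f i < 1) : ∃ C > 1, ∀ i, p i → f i ≤ 1 - C⁻¹ := by
  obtain ⟨M, hM1, hM⟩ : ∃ M < 1, ∀ i, p i → f i ≤ M := by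
    rcases {i | p i}.eq_empty_or_nonempty with h | h
    · exact ⟨0, one_pos, fun i hi => absurd (h ▸ hi : i ∈ (∅ : Set ι)) (notMem_empty i)⟩
    · obtain ⟨i₀, hi₀, hmax⟩ := Set.exists_max_image _ f (Set.toFinite _) h
      exact ⟨f i₀, hf i₀ hi₀, hmax⟩
  refine ⟨(1 - max M 2⁻¹)⁻¹, ?_, fun i hi => ?_⟩
  · rw [gt_iff_lt, one_lt_inv₀ (by simp [hM1]; norm_num)]
    simp
  · rw [inv_inv]
    linarith [hM i hi, le_max_left M 2⁻¹]

lemma mobiusOP_infty (g : SL2) :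
    mobiusOP g OnePoint.infty = if g 1 0 = 0 then OnePoint.infty else ↑(g 0 0 / g 1 0) := rfl

lemma mobiusOP_coe (g : SL2) (x : ℝ) :
    mobiusOP g x = if mobiusDen g x = 0 then OnePoint.infty else ↑(mobius g x) := rfl

namespace SchottkyData

variable {r : ℕ} (S : SchottkyData r)

lemma mobiusOP_mem_Icc (c : Fin (2 * r)) {z : OnePoint ℝ}
    (hz : z ∉ ((↑) : ℝ → OnePoint ℝ) '' Ioo (S.ξ₀ (bar c)) (S.ξ₁ (bar c))) :
    mobiusOP (S.γ c) z ∈ ((↑) : ℝ → OnePoint ℝ) '' Icc (S.ξ₀ c) (S.ξ₁ c) :=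
  S.hmap c ▸ mem_image_of_mem _ ⟨mem_univ z, hz⟩

lemma γ_one_zero_ne_zero (c : Fin (2 * r)) : (S.γ c) 1 0 ≠ 0 := by
  intro h0
  obtain ⟨t, -, ht⟩ := S.mobiusOP_mem_Icc c (z := OnePoint.infty) (by simp)
  rw [mobiusOP_infty, if_pos h0] at ht
  exact OnePoint.coe_ne_infty t ht

lemma div_mem_Icc (c : Fin (2 * r)) :
    (S.γ c) 0 0 / (S.γ c) 1 0 ∈ Icc (S.ξ₀ c) (S.ξ₁ c) := by
  obtain ⟨t, ht, hte⟩ := S.mobiusOP_mem_Icc c (z := OnePoint.infty) (by simp)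
  rw [mobiusOP_infty, if_neg (S.γ_one_zero_ne_zero c)] at hte
  exact OnePoint.coe_eq_coe.mp hte ▸ ht

lemma mobiusPole_mem_Ioo (c : Fin (2 * r)) :
    mobiusPole (S.γ c) ∈ Ioo (S.ξ₀ (bar c)) (S.ξ₁ (bar c)) := by
  by_contra h
  obtain ⟨t, -, ht⟩ := S.mobiusOP_mem_Icc c (z := mobiusPole (S.γ c)) (by simpa using h)
  have hden : mobiusDen (S.γ c) (mobiusPole (S.γ c)) = 0 := by
    simp [mobiusDen_eq_mul_sub_mobiusPole (S.γ_one_zero_ne_zero c)]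
  rw [mobiusOP_coe, if_pos hden] at ht
  exact OnePoint.coe_ne_infty t ht

lemma mobiusDen_ne_zero (c : Fin (2 * r)) {x : ℝ}
    (hx : x ∉ Ioo (S.ξ₀ (bar c)) (S.ξ₁ (bar c))) :
    mobiusDen (S.γ c) x ≠ 0 :=
  mobiusDen_ne_zero_of_ne_mobiusPole (S.γ_one_zero_ne_zero c)
    fun h => hx (h ▸ S.mobiusPole_mem_Ioo c)

lemma mobius_mem_Icc (c : Fin (2 * r)) {x : ℝ}
    (hx : x ∉ Ioo (S.ξ₀ (bar c)) (S.ξ₁ (bar c))) :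
    mobius (S.γ c) x ∈ Icc (S.ξ₀ c) (S.ξ₁ c) := by
  obtain ⟨t, ht, hte⟩ := S.mobiusOP_mem_Icc c (z := x) (by simpa using hx)
  rw [mobiusOP_coe, if_neg (S.mobiusDen_ne_zero c hx)] at hte
  exact OnePoint.coe_eq_coe.mp hte ▸ ht

/-- On each of the two rays outside `I_{bar c}` the map `γ c` is increasing and takes values
strictly between `γ c ∞` and the image of the endpoint of the ray, both of which lie in `I_c`. -/
lemma mobius_mem_Ioo (c : Fin (2 * r)) {x : ℝ}
    (hx : x ∉ Icc (S.ξ₀ (bar c)) (S.ξ₁ (bar c))) :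
    mobius (S.γ c) x ∈ Ioo (S.ξ₀ c) (S.ξ₁ c) := by
  have hc := S.γ_one_zero_ne_zero c
  have hpole := S.mobiusPole_mem_Ioo c
  have hA := S.div_mem_Icc c
  have hdenOn : ∀ {s t : ℝ}, (∀ y ∈ Icc s t, y ≠ mobiusPole (S.γ c)) →
      ∀ y ∈ Icc s t, mobiusDen (S.γ c) y ≠ 0 :=
    fun h y hy => mobiusDen_ne_zero_of_ne_mobiusPole hc (h y hy)
  rw [mem_Icc, not_and_or, not_le, not_le] at hx
  rcases hx with hxl | hxr
  · have hend := S.mobius_mem_Icc c (x := S.ξ₀ (bar c)) (fun h => h.1.false)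
    have hlt : mobius (S.γ c) x < mobius (S.γ c) (S.ξ₀ (bar c)) :=
      mobius_lt_mobius (hdenOn fun y hy => (hy.2.trans_lt hpole.1).ne) hxl
    exact ⟨hA.1.trans_lt (div_lt_mobius_of_lt_mobiusPole hc (hxl.trans hpole.1)),
      hlt.trans_le hend.2⟩
  · have hend := S.mobius_mem_Icc c (x := S.ξ₁ (bar c)) (fun h => h.2.false)
    have hlt : mobius (S.γ c) (S.ξ₁ (bar c)) < mobius (S.γ c) x :=
      mobius_lt_mobius (hdenOn fun y hy => (hpole.2.trans_le hy.1).ne') hxr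
    exact ⟨hend.1.trans_lt hlt,
      (mobius_lt_div_of_mobiusPole_lt hc (hpole.2.trans hxr)).trans_le hA.2⟩

lemma isWord_iff {l : List (Fin (2 * r))} : S.IsWord l ↔ l.IsChain fun p q => q ≠ bar p :=
  Iff.rfl

lemma isWord_append_singleton_append_singleton_iff {m : List (Fin (2 * r))} {c b : Fin (2 * r)} :
    S.IsWord (m ++ [c] ++ [b]) ↔ S.IsWord (m ++ [c]) ∧ b ≠ bar c := by
  simp [isWord_iff, List.append_assoc]

lemma wordγ_cons (c : Fin (2 * r)) (m : List (Fin (2 * r))) :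
    S.wordγ (c :: m) = S.γ c * S.wordγ m := by
  simp [wordγ]

lemma wordγ_append_singleton (m : List (Fin (2 * r))) (c : Fin (2 * r)) :
    S.wordγ (m ++ [c]) = S.wordγ m * S.γ c := by
  simp [wordγ]

lemma wordI_append_singleton (m : List (Fin (2 * r))) (c : Fin (2 * r)) :
    S.wordI (m ++ [c]) = mobius (S.wordγ m) '' Icc (S.ξ₀ c) (S.ξ₁ c) := by
  simp [wordI]

lemma mobiusDen_wordγ_ne_zero_and_mem {m : List (Fin (2 * r))} {e : Fin (2 * r)}
    (hw : S.IsWord (m ++ [e])) {x : ℝ} (hx : x ∈ Icc (S.ξ₀ e) (S.ξ₁ e)) :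
    mobiusDen (S.wordγ m) x ≠ 0 ∧ mobius (S.wordγ m) x ∈
      Icc (S.ξ₀ ((m ++ [e]).head (by simp))) (S.ξ₁ ((m ++ [e]).head (by simp))) := by
  induction m with
  | nil => simpa [wordγ, mobiusDen_one, mobius_one] using hx
  | cons c m ih =>
    rw [isWord_iff, List.cons_append, List.isChain_cons] at hw
    obtain ⟨hhead, hw⟩ := hw
    obtain ⟨hden, hmem⟩ := ih hw
    have hout : mobius (S.wordγ m) x ∉ Icc (S.ξ₀ (bar c)) (S.ξ₁ (bar c)) :=
      disjoint_left.mp (S.hdisj _ _ (hhead _ (List.head?_eq_some_head _))) hmem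
    rw [wordγ_cons, mobiusDen_mul hden, mobius_mul hden]
    exact ⟨mul_ne_zero (S.mobiusDen_ne_zero c fun h => hout (Ioo_subset_Icc_self h)) hden,
      Ioo_subset_Icc_self (S.mobius_mem_Ioo c hout)⟩

lemma notMem_Icc_bar {c b : Fin (2 * r)} (hbc : b ≠ bar c) {t : ℝ}
    (ht : t ∈ Icc (S.ξ₀ b) (S.ξ₁ b)) : t ∉ Icc (S.ξ₀ (bar c)) (S.ξ₁ (bar c)) :=
  disjoint_left.mp (S.hdisj _ _ hbc) ht

lemma mobiusDen_ne_zero_of_ne_bar {c b : Fin (2 * r)} (hbc : b ≠ bar c) :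
    ∀ t ∈ Icc (S.ξ₀ b) (S.ξ₁ b), mobiusDen (S.γ c) t ≠ 0 := fun _ ht =>
  S.mobiusDen_ne_zero c fun h => S.notMem_Icc_bar hbc ht (Ioo_subset_Icc_self h)

lemma mobius_ξ₀_mem_Ioo {c b : Fin (2 * r)} (hbc : b ≠ bar c) :
    mobius (S.γ c) (S.ξ₀ b) ∈ Ioo (S.ξ₀ c) (S.ξ₁ c) :=
  S.mobius_mem_Ioo c (S.notMem_Icc_bar hbc ⟨le_rfl, (S.hlt b).le⟩)

lemma mobius_ξ₁_mem_Ioo {c b : Fin (2 * r)} (hbc : b ≠ bar c) :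
    mobius (S.γ c) (S.ξ₁ b) ∈ Ioo (S.ξ₀ c) (S.ξ₁ c) :=
  S.mobius_mem_Ioo c (S.notMem_Icc_bar hbc ⟨(S.hlt b).le, le_rfl⟩)

lemma mobius_ξ₀_le_mobius_ξ₁ {c b : Fin (2 * r)} (hbc : b ≠ bar c) :
    mobius (S.γ c) (S.ξ₀ b) ≤ mobius (S.γ c) (S.ξ₁ b) :=
  (mobius_lt_mobius (S.mobiusDen_ne_zero_of_ne_bar hbc) (S.hlt b)).le

def contractionRatio (c b : Fin (2 * r)) : ℝ :=
  crossRatio (S.ξ₀ c) (mobius (S.γ c) (S.ξ₀ b)) (mobius (S.γ c) (S.ξ₁ b)) (S.ξ₁ c)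

lemma contractionRatio_lt_one {c b : Fin (2 * r)} (hbc : b ≠ bar c) :
    S.contractionRatio c b < 1 :=
  crossRatio_lt_one (S.mobius_ξ₀_mem_Ioo hbc).1 (S.mobius_ξ₀_le_mobius_ξ₁ hbc)
    (S.mobius_ξ₁_mem_Ioo hbc).2

lemma ivlen_wordI_append_le {m : List (Fin (2 * r))} {c b : Fin (2 * r)}
    (hw : S.IsWord (m ++ [c] ++ [b])) :
    ivlen (S.wordI (m ++ [c] ++ [b])) ≤
      S.contractionRatio c b * ivlen (S.wordI (m ++ [c])) := by
  obtain ⟨hw, hbc⟩ := S.isWord_append_singleton_append_singleton_iff.mp hw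
  have hden : ∀ t ∈ Icc (S.ξ₀ c) (S.ξ₁ c), mobiusDen (S.wordγ m) t ≠ 0 :=
    fun _ ht => (S.mobiusDen_wordγ_ne_zero_and_mem hw ht).1
  have hmono := (strictMonoOn_mobius hden).monotoneOn
  have hc := (S.hlt c).le
  set u := mobius (S.γ c) (S.ξ₀ b)
  set v := mobius (S.γ c) (S.ξ₁ b)
  have hu : u ∈ Ioo (S.ξ₀ c) (S.ξ₁ c) := S.mobius_ξ₀_mem_Ioo hbc
  have hv : v ∈ Ioo (S.ξ₀ c) (S.ξ₁ c) := S.mobius_ξ₁_mem_Ioo hbc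
  have huv : u ≤ v := S.mobius_ξ₀_le_mobius_ξ₁ hbc
  have hIc : S.wordI (m ++ [c]) =
      Icc (mobius (S.wordγ m) (S.ξ₀ c)) (mobius (S.wordγ m) (S.ξ₁ c)) := by
    rw [wordI_append_singleton, mobius_image_Icc hc hden]
  have hIcb : S.wordI (m ++ [c] ++ [b]) = Icc (mobius (S.wordγ m) u) (mobius (S.wordγ m) v) := by
    have hdenb := S.mobiusDen_ne_zero_of_ne_bar hbc
    rw [wordI_append_singleton, wordγ_append_singleton, image_mobius_mul hdenb,
      mobius_image_Icc (S.hlt b).le hdenb,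
      mobius_image_Icc huv fun t ht => hden t ⟨hu.1.le.trans ht.1, ht.2.trans hv.2.le⟩]
  rw [hIc, hIcb, ivlen_Icc (hmono ⟨le_rfl, hc⟩ ⟨hc, le_rfl⟩ hc),
    ivlen_Icc (hmono (Ioo_subset_Icc_self hu) (Ioo_subset_Icc_self hv) huv)]
  exact mobius_sub_le_crossRatio_mul hden hu.1 huv hv.2

end SchottkyData

/-- **Uniform contraction of the intervals of the Schottky structure:**
there is `C_Γ > 1` depending only on the Schottky data such that
`|I_{𝐚b}| ≤ (1 − C_Γ⁻¹)|I_𝐚|` for all nonempty words `𝐚` and letters `b` with `𝐚 → b`. -/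
theorem interval_contraction (r : ℕ) (S : SchottkyData r) :
    ∃ C > (1 : ℝ), ∀ (l : List (Fin (2 * r))) (b : Fin (2 * r)),
      l ≠ [] → S.IsWord (l ++ [b]) →
      ivlen (S.wordI (l ++ [b])) ≤ (1 - C⁻¹) * ivlen (S.wordI l) := by
  obtain ⟨C, hC, hratio⟩ := exists_one_lt_forall_le_one_sub_inv
    (p := fun cb : Fin (2 * r) × Fin (2 * r) => cb.2 ≠ bar cb.1)
    (f := fun cb => S.contractionRatio cb.1 cb.2) fun _ => S.contractionRatio_lt_one
  refine ⟨C, hC, fun l b hl hw => ?_⟩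
  obtain ⟨m, c, rfl⟩ := (l.eq_nil_or_concat').resolve_left hl
  calc ivlen (S.wordI (m ++ [c] ++ [b]))
      ≤ S.contractionRatio c b * ivlen (S.wordI (m ++ [c])) := S.ivlen_wordI_append_le hw
    _ ≤ (1 - C⁻¹) * ivlen (S.wordI (m ++ [c])) :=
      mul_le_mul_of_nonneg_right
        (hratio (c, b) (S.isWord_append_singleton_append_singleton_iff.mp hw).2)
        ENNReal.toReal_nonneg

end
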